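/- arXiv:2406.04274 — 5 statements merged into one kernel-verified Lean document; each statement's English description precedes it below -/
import Mathlib

section
/- Let F be a finite class of functions f: X×Y → ℝ and define the coverage constant 𝔠 = sqrt( sup_{f∈F} E_{x~ρ, y1~π*(·|x), y2~π_ref(·|x)}[Z_f(x,y1,y2)]² / E_{x~ρ, y1,y2~π_ref(·|x)}[Z_f(x,y1,y2)²] ), where Z_f(x,y1,y2) = r*(x,y1) − r*(x,y2) − f(x,y1) + f(x,y2), with the convention 0/0 = 0. If π_ref(y|x) > 0 for all x, y, then 𝔠 ≤ sup_{x,y} π*(y|x)/π_ref(y|x). -/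
/-!
Put the weight `w(x, y₁, y₂) = ρ(x) π_ref(y₁|x) π_ref(y₂|x)` on triples. The numerator is then
`E_w[(π*/π_ref)(y₁|x) · Z_f]` and the denominator `E_w[Z_f²]`, so Cauchy–Schwarz for `w` with
the density ratio bounded by its supremum `M` gives `num² ≤ M² · den` for every `f`.
-/

open Finset

lemma sq_sum_mul_mul_le_of_abs_le {ι : Type*} (s : Finset ι) (w g h : ι → ℝ) {M : ℝ}
    (hw : ∀ i ∈ s, 0 ≤ w i) (hg : ∀ i ∈ s, |g i| ≤ M) :
    (∑ i ∈ s, w i * g i * h i) ^ 2 ≤ M ^ 2 * (∑ i ∈ s, w i) * ∑ i ∈ s, w i * h i ^ 2 := by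
  rw [mul_sum s w (M ^ 2)]
  apply sum_sq_le_sum_mul_sum_of_sq_le_mul s
  · exact fun i hi => mul_nonneg (sq_nonneg M) (hw i hi)
  · exact fun i hi => mul_nonneg (hw i hi) (sq_nonneg _)
  · intro i hi
    have hg2 : g i ^ 2 ≤ M ^ 2 := sq_le_sq' (abs_le.1 (hg i hi)).1 (abs_le.1 (hg i hi)).2
    calc (w i * g i * h i) ^ 2 = g i ^ 2 * (w i * (w i * h i ^ 2)) := by ring
      _ ≤ M ^ 2 * (w i * (w i * h i ^ 2)) :=
        mul_le_mul_of_nonneg_right hg2 (mul_nonneg (hw i hi) (mul_nonneg (hw i hi) (sq_nonneg _)))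
      _ = M ^ 2 * w i * (w i * h i ^ 2) := by ring

lemma sum_mul_sum_sum_eq_sum_prod {X Y : Type*} [Fintype X] [Fintype Y] (ρ : X → ℝ)
    (F : X → Y → Y → ℝ) :
    ∑ x, ρ x * ∑ y₁, ∑ y₂, F x y₁ y₂ = ∑ p : X × Y × Y, ρ p.1 * F p.1 p.2.1 p.2.2 := by
  simp only [Fintype.sum_prod_type, mul_sum]

lemma sum_mul_mul_prod_eq_one {X Y : Type*} [Fintype X] [Fintype Y] {ρ : X → ℝ}
    {π : X → Y → ℝ} (hρ : ∑ x, ρ x = 1) (hπ : ∀ x, ∑ y, π x y = 1) :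
    ∑ p : X × Y × Y, ρ p.1 * π p.1 p.2.1 * π p.1 p.2.2 = 1 := by
  simp only [Fintype.sum_prod_type, mul_assoc, ← mul_sum, hπ, mul_one, hρ]

theorem coverage_le_density_ratio_general {X Y : Type*} [Fintype X] [Fintype Y]
    [Nonempty X] [Nonempty Y]
    (ρ : X → ℝ) (hρ0 : ∀ x, 0 ≤ ρ x) (hρ1 : ∑ x, ρ x = 1)
    (rstar : X → Y → ℝ)
    (πstar πref : X → Y → ℝ)
    (hπstar0 : ∀ x y, 0 ≤ πstar x y)
    (hπref0 : ∀ x y, 0 < πref x y) (hπref1 : ∀ x, ∑ y, πref x y = 1)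
    (FF : Finset (X → Y → ℝ)) (hFF : FF.Nonempty) :
    let Z : (X → Y → ℝ) → X → Y → Y → ℝ := fun f x y1 y2 =>
      rstar x y1 - rstar x y2 - f x y1 + f x y2;
    let num : (X → Y → ℝ) → ℝ := fun f =>
      ∑ x, ρ x * ∑ y1, ∑ y2, πstar x y1 * πref x y2 * Z f x y1 y2;
    let den : (X → Y → ℝ) → ℝ := fun f =>
      ∑ x, ρ x * ∑ y1, ∑ y2, πref x y1 * πref x y2 * (Z f x y1 y2) ^ 2;
    let C : ℝ := Real.sqrt (FF.sup' hFF fun f => (num f) ^ 2 / den f);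
    C ≤ (Finset.univ : Finset (X × Y)).sup' Finset.univ_nonempty
          (fun p => πstar p.1 p.2 / πref p.1 p.2) := by
  intro Z num den C
  set M := (univ : Finset (X × Y)).sup' univ_nonempty fun p => πstar p.1 p.2 / πref p.1 p.2
  let w : X × Y × Y → ℝ := fun p => ρ p.1 * πref p.1 p.2.1 * πref p.1 p.2.2
  have hratio_nonneg : ∀ x y, 0 ≤ πstar x y / πref x y := fun x y =>
    div_nonneg (hπstar0 x y) (hπref0 x y).le
  have hratio_le : ∀ x y, πstar x y / πref x y ≤ M := fun x y =>
    le_sup' (fun p : X × Y => πstar p.1 p.2 / πref p.1 p.2) (mem_univ (x, y))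
  have hM : 0 ≤ M := (hratio_nonneg (Classical.arbitrary X) (Classical.arbitrary Y)).trans
    (hratio_le _ _)
  have hw : ∀ p, 0 ≤ w p := fun p =>
    mul_nonneg (mul_nonneg (hρ0 _) (hπref0 _ _).le) (hπref0 _ _).le
  have hden : ∀ f, den f = ∑ p, w p * Z f p.1 p.2.1 p.2.2 ^ 2 := fun f => by
    simp only [den, sum_mul_sum_sum_eq_sum_prod, w, mul_assoc]
  have hnum : ∀ f, num f = ∑ p, w p * (πstar p.1 p.2.1 / πref p.1 p.2.1) * Z f p.1 p.2.1 p.2.2 :=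
    fun f => by
      simp only [num, sum_mul_sum_sum_eq_sum_prod, w]
      refine sum_congr rfl fun p _ => ?_
      field_simp [(hπref0 p.1 p.2.1).ne']
  have hbound : ∀ f ∈ FF, num f ^ 2 / den f ≤ M ^ 2 := fun f _ => by
    have hcs := sq_sum_mul_mul_le_of_abs_le univ w
      (fun p => πstar p.1 p.2.1 / πref p.1 p.2.1) (fun p => Z f p.1 p.2.1 p.2.2)
      (fun p _ => hw p) (fun p _ => (abs_of_nonneg (hratio_nonneg _ _)).trans_le (hratio_le _ _))
    rw [sum_mul_mul_prod_eq_one hρ1 hπref1, mul_one, ← hnum, ← hden] at hcs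
    have hden_nonneg : 0 ≤ den f := by
      rw [hden]
      exact sum_nonneg fun p _ => mul_nonneg (hw p) (sq_nonneg _)
    exact div_le_of_le_mul₀ hden_nonneg (sq_nonneg M) hcs
  exact (Real.sqrt_le_left hM).2 (sup'_le hFF _ hbound)

/-- The coverage constant
`𝔠 = sqrt( sup_{f∈F} E_{ρ, y1~π*, y2~π_ref}[Z_f]² / E_{ρ, y1,y2~π_ref}[Z_f²] )`
(convention `0/0 = 0`, which is Lean's division convention) is bounded by the
density-ratio bound: if `π_ref(y|x) > 0` everywhere, then
`𝔠 ≤ sup_{x,y} π*(y|x)/π_ref(y|x)`. -/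
theorem coverage_le_density_ratio {X Y : Type*} [Fintype X] [Fintype Y]
    [Nonempty X] [Nonempty Y]
    (ρ : X → ℝ) (hρ0 : ∀ x, 0 ≤ ρ x) (hρ1 : ∑ x, ρ x = 1)
    (rstar : X → Y → ℝ)
    (πstar πref : X → Y → ℝ)
    (hπstar0 : ∀ x y, 0 ≤ πstar x y) (hπstar1 : ∀ x, ∑ y, πstar x y = 1)
    (hπref0 : ∀ x y, 0 < πref x y) (hπref1 : ∀ x, ∑ y, πref x y = 1)
    (FF : Finset (X → Y → ℝ)) (hFF : FF.Nonempty) :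
    let Z : (X → Y → ℝ) → X → Y → Y → ℝ := fun f x y1 y2 =>
      rstar x y1 - rstar x y2 - f x y1 + f x y2;
    let num : (X → Y → ℝ) → ℝ := fun f =>
      ∑ x, ρ x * ∑ y1, ∑ y2, πstar x y1 * πref x y2 * Z f x y1 y2;
    let den : (X → Y → ℝ) → ℝ := fun f =>
      ∑ x, ρ x * ∑ y1, ∑ y2, πref x y1 * πref x y2 * (Z f x y1 y2) ^ 2;
    let C : ℝ := Real.sqrt (FF.sup' hFF fun f => (num f) ^ 2 / den f);
    C ≤ (Finset.univ : Finset (X × Y)).sup' Finset.univ_nonempty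
          (fun p => πstar p.1 p.2 / πref p.1 p.2) :=
  coverage_le_density_ratio_general ρ hρ0 hρ1 rstar πstar πref hπstar0 hπref0 hπref1 FF hFF
end

section
/- Let Y be a finite set, μ a probability distribution on Y with μ(y) > 0 for all y, η > 0, and f_1,…,f_T: Y → ℝ. Define ℓ(π) = η·D_KL(π || μ), π_1 = μ, and for t ≥ 1 let π_{t+1}(y) ∝ π_t(y)·exp(f_t(y)/η). Then for every probability distribution π on Y: Σ_{t=1}^T ⟨π, f_t⟩ − ℓ(π) ≤ Σ_{t=1}^T ⟨π_{t+1}, f_t⟩ − ℓ(π_1), where ⟨p, f⟩ = Σ_{y∈Y} p(y)·f(y). -/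
/-!
With `S_t = ∑_{s ≤ t} f_s / η` and `Z_t = ∑_y μ y · exp (S_t y)`, the iterates are the Gibbs
distributions `π_{t+1} = μ · exp S_t / Z_t`. The Gibbs variational inequality bounds the left-hand
side by `η log Z_T`. Jensen's inequality for `exp` under `π_{t+1}` gives
`log Z_t - log Z_{t-1} ≤ ⟨π_{t+1}, f_t / η⟩`, which telescopes to `η log Z_T ≤ ∑_t ⟨π_{t+1}, f_t⟩`,
and the divergence term of `π_1 = μ` vanishes.
-/

open Finset

lemma Real.mul_log_div_le_sub {p a : ℝ} (hp : 0 ≤ p) (ha : 0 < a) :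
    p * log (a / p) ≤ a - p := by
  rcases hp.eq_or_lt with rfl | hp
  · simpa using ha.le
  calc p * log (a / p) ≤ p * (a / p - 1) :=
        mul_le_mul_of_nonneg_left (log_le_sub_one_of_pos (div_pos ha hp)) hp.le
    _ = a - p := by field_simp

section Gibbs

open Real

variable {Y : Type*} [Fintype Y]

/-- Gibbs' inequality, in the form `KL(p ‖ q / ∑ q) ≥ 0`. -/
lemma sum_mul_log_div_le_log_sum [Nonempty Y] {p q : Y → ℝ} (hp : ∀ y, 0 ≤ p y)
    (hp1 : ∑ y, p y = 1) (hq : ∀ y, 0 < q y) : ∑ y, p y * log (q y / p y) ≤ log (∑ y, q y) := by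
  have hZ : 0 < ∑ y, q y := sum_pos (fun y _ => hq y) univ_nonempty
  have hterm : ∀ y, p y * log (q y / p y) - p y * log (∑ y, q y)
      = p y * log (q y / (∑ y, q y) / p y) := by
    intro y
    rcases (hp y).eq_or_lt with h | h
    · simp [← h]
    · rw [div_right_comm, log_div (div_pos (hq y) h).ne' hZ.ne', mul_sub]
  have := sum_le_sum fun y (_ : y ∈ univ) =>
    mul_log_div_le_sub (hp y) (div_pos (hq y) hZ)
  rw [sum_sub_distrib, ← sum_div, div_self hZ.ne', hp1, sub_self,
    ← sum_congr rfl fun y _ => hterm y, sum_sub_distrib, ← sum_mul, hp1, one_mul] at this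
  linarith

noncomputable def partitionFn (q g : Y → ℝ) : ℝ := ∑ y, q y * exp (g y)

noncomputable def tilt (q g : Y → ℝ) (y : Y) : ℝ := q y * exp (g y) / partitionFn q g

lemma partitionFn_pos [Nonempty Y] {q : Y → ℝ} (hq : ∀ y, 0 < q y) (g : Y → ℝ) :
    0 < partitionFn q g :=
  sum_pos (fun y _ => mul_pos (hq y) (exp_pos _)) univ_nonempty

lemma partitionFn_zero (q : Y → ℝ) : partitionFn q 0 = ∑ y, q y := by
  simp [partitionFn]

lemma tilt_pos [Nonempty Y] {q : Y → ℝ} (hq : ∀ y, 0 < q y) (g : Y → ℝ) (y : Y) :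
    0 < tilt q g y :=
  div_pos (mul_pos (hq y) (exp_pos _)) (partitionFn_pos hq g)

lemma sum_tilt {q g : Y → ℝ} (hZ : partitionFn q g ≠ 0) : ∑ y, tilt q g y = 1 := by
  simp only [tilt, ← sum_div]
  exact div_self hZ

lemma tilt_zero {q : Y → ℝ} (hq1 : ∑ y, q y = 1) : tilt q 0 = q := by
  ext y
  simp [tilt, partitionFn_zero, hq1]

lemma partitionFn_tilt {q g : Y → ℝ} (h : Y → ℝ) :
    partitionFn (tilt q g) h = partitionFn q (g + h) / partitionFn q g := by
  simp only [partitionFn, tilt, sum_div, Pi.add_apply, exp_add]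
  exact sum_congr rfl fun y _ => by ring

lemma tilt_tilt {q g : Y → ℝ} (hZ : partitionFn q g ≠ 0) (h : Y → ℝ) :
    tilt (tilt q g) h = tilt q (g + h) := by
  ext y
  rw [tilt, partitionFn_tilt, tilt, tilt, Pi.add_apply, exp_add]
  field_simp

/-- The Gibbs (Donsker–Varadhan) variational inequality. -/
lemma inner_sub_sum_mul_log_div_le [Nonempty Y] {p q : Y → ℝ} (hp : ∀ y, 0 ≤ p y)
    (hp1 : ∑ y, p y = 1) (hq : ∀ y, 0 < q y) (g : Y → ℝ) :
    ∑ y, p y * g y - ∑ y, p y * log (p y / q y) ≤ log (partitionFn q g) := by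
  have hterm : ∀ y, p y * g y - p y * log (p y / q y) = p y * log (q y * exp (g y) / p y) := by
    intro y
    rcases (hp y).eq_or_lt with h | h
    · simp [← h]
    · rw [log_div (mul_pos (hq y) (exp_pos _)).ne' h.ne', log_mul (hq y).ne' (exp_pos _).ne',
        log_exp, log_div h.ne' (hq y).ne']
      ring
  rw [← sum_sub_distrib, sum_congr rfl fun y _ => hterm y]
  exact sum_mul_log_div_le_log_sum hp hp1 fun y => mul_pos (hq y) (exp_pos _)

lemma inner_le_log_partitionFn {p : Y → ℝ} (hp : ∀ y, 0 ≤ p y) (hp1 : ∑ y, p y = 1)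
    (g : Y → ℝ) : ∑ y, p y * g y ≤ log (partitionFn p g) := by
  have hjensen : exp (∑ y, p y * g y) ≤ partitionFn p g :=
    convexOn_exp.map_sum_le (fun y _ => hp y) hp1 (fun y _ => Set.mem_univ _)
  exact (le_log_iff_exp_le ((exp_pos _).trans_le hjensen)).2 hjensen

/-- Jensen's inequality for `exp` under `tilt q (g + h)`, applied to `-h`. -/
lemma log_partitionFn_add_sub_le [Nonempty Y] {q : Y → ℝ} (hq : ∀ y, 0 < q y) (g h : Y → ℝ) :
    log (partitionFn q (g + h)) - log (partitionFn q g) ≤ ∑ y, tilt q (g + h) y * h y := by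
  have := inner_le_log_partitionFn (fun y => (tilt_pos hq (g + h) y).le)
    (sum_tilt (partitionFn_pos hq (g + h)).ne') (-h)
  rw [partitionFn_tilt, add_neg_cancel_right,
    log_div (partitionFn_pos hq g).ne' (partitionFn_pos hq (g + h)).ne'] at this
  simp only [Pi.neg_apply, mul_neg, sum_neg_distrib] at this
  linarith

lemma log_partitionFn_sum_le [Nonempty Y] {q : Y → ℝ} (hq : ∀ y, 0 < q y) (hq1 : ∑ y, q y = 1)
    (g : ℕ → Y → ℝ) (n : ℕ) :
    log (partitionFn q (∑ s ∈ Icc 1 n, g s))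
      ≤ ∑ t ∈ Icc 1 n, ∑ y, tilt q (∑ s ∈ Icc 1 t, g s) y * g t y := by
  induction n with
  | zero => simp [partitionFn_zero, hq1]
  | succ n ih =>
    have hstep := log_partitionFn_add_sub_le hq (∑ s ∈ Icc 1 n, g s) (g (n + 1))
    rw [← sum_Icc_succ_top (Nat.le_add_left 1 n)] at hstep
    rw [sum_Icc_succ_top (Nat.le_add_left 1 n)
      (fun t => ∑ y, tilt q (∑ s ∈ Icc 1 t, g s) y * g t y)]
    linarith

lemma eq_tilt_sum_of_eq_tilt [Nonempty Y] {q : Y → ℝ} (hq : ∀ y, 0 < q y) (hq1 : ∑ y, q y = 1)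
    {g πs : ℕ → Y → ℝ} (h1 : πs 1 = q) (hrec : ∀ t, 1 ≤ t → πs (t + 1) = tilt (πs t) (g t))
    (t : ℕ) : πs (t + 1) = tilt q (∑ s ∈ Icc 1 t, g s) := by
  induction t with
  | zero => simp [h1, tilt_zero hq1]
  | succ t ih =>
    rw [hrec (t + 1) (Nat.le_add_left 1 t), ih, tilt_tilt (partitionFn_pos hq _).ne',
      sum_Icc_succ_top (Nat.le_add_left 1 t)]

end Gibbs

/-- FTRL-style comparison (Lemma "no-regret-1"): with
`ℓ(π) = η·D_KL(π‖μ)`, `π_1 = μ` and `π_{t+1}(y) ∝ π_t(y)·exp(f_t(y)/η)`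
for all `t ≥ 1`, every distribution `π` on `Y` satisfies
`Σ_{t=1}^T ⟨π, f_t⟩ − ℓ(π) ≤ Σ_{t=1}^T ⟨π_{t+1}, f_t⟩ − ℓ(π_1)`. -/
theorem ftrl_comparison {Y : Type*} [Fintype Y]
    (μ : Y → ℝ) (hμ0 : ∀ y, 0 < μ y) (hμ1 : ∑ y, μ y = 1)
    (η : ℝ) (hη : 0 < η) (T : ℕ)
    (f : ℕ → Y → ℝ)
    (πs : ℕ → Y → ℝ)
    (hinit : πs 1 = μ)
    (hrec : ∀ t, 1 ≤ t → ∀ y,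
      πs (t + 1) y = πs t y * Real.exp (f t y / η)
        / ∑ y', πs t y' * Real.exp (f t y' / η)) :
    ∀ π : Y → ℝ, (∀ y, 0 ≤ π y) → (∑ y, π y = 1) →
      (∑ t ∈ Finset.Icc 1 T, ∑ y, π y * f t y)
          - η * ∑ y, π y * Real.log (π y / μ y)
        ≤ (∑ t ∈ Finset.Icc 1 T, ∑ y, πs (t + 1) y * f t y)
          - η * ∑ y, πs 1 y * Real.log (πs 1 y / μ y) := by
  intro π hπ0 hπ1
  have : Nonempty Y :=
    univ_nonempty_iff.mp (nonempty_of_sum_ne_zero (by rw [hμ1]; exact one_ne_zero))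
  set g : ℕ → Y → ℝ := fun t y => f t y / η
  have hf : ∀ t y, f t y = η * g t y := fun t y => (mul_div_cancel₀ _ hη.ne').symm
  have hπs : ∀ t, πs (t + 1) = tilt μ (∑ s ∈ Icc 1 t, g s) :=
    eq_tilt_sum_of_eq_tilt hμ0 hμ1 hinit fun t ht => funext (hrec t ht)
  have hkl : ∑ y, πs 1 y * Real.log (πs 1 y / μ y) = 0 := by
    simp [hinit, div_self (hμ0 _).ne']
  have hgain : ∑ t ∈ Icc 1 T, ∑ y, π y * f t y = η * ∑ y, π y * (∑ t ∈ Icc 1 T, g t) y := by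
    simp only [hf, Finset.sum_apply, mul_sum, mul_left_comm]
    exact sum_comm
  rw [hkl, mul_zero, sub_zero, hgain, ← mul_sub]
  calc η * (∑ y, π y * (∑ t ∈ Icc 1 T, g t) y - ∑ y, π y * Real.log (π y / μ y))
      ≤ η * Real.log (partitionFn μ (∑ t ∈ Icc 1 T, g t)) :=
        mul_le_mul_of_nonneg_left (inner_sub_sum_mul_log_div_le hπ0 hπ1 hμ0 _) hη.le
    _ ≤ η * ∑ t ∈ Icc 1 T, ∑ y, tilt μ (∑ s ∈ Icc 1 t, g s) y * g t y :=
        mul_le_mul_of_nonneg_left (log_partitionFn_sum_le hμ0 hμ1 g T) hη.le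
    _ = ∑ t ∈ Icc 1 T, ∑ y, πs (t + 1) y * f t y := by
        simp only [hπs, hf, mul_sum, mul_left_comm]
end

section
/- Let Y be a finite set, μ a probability distribution on Y with μ(y) > 0 for all y, η > 0, and f_1,…,f_T: Y → ℝ. Define ℓ(π) = η·D_KL(π || μ), π_1 = μ, and for t ≥ 1 let π_{t+1}(y) ∝ π_t(y)·exp(f_t(y)/η). Then for every probability distribution π on Y: Σ_{t=1}^T ⟨π − π_t, f_t⟩ ≤ Σ_{t=1}^T ⟨π_{t+1} − π_t, f_t⟩ − ℓ(π_1) + ℓ(π), where ⟨p, f⟩ = Σ_{y∈Y} p(y)·f(y). -/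
/-! Exponential weights is mirror descent for the KL divergence: writing `π_{t+1} ∝ π_t e^{f_t/η}` as
`f_t = η (log π_{t+1} - log π_t) + const` and using that `π` and `π_{t+1}` have the same mass gives
the three-point identity
`⟨π - π_{t+1}, f_t⟩ = η (KL(π‖π_t) - KL(π‖π_{t+1}) - KL(π_{t+1}‖π_t))`.
Dropping the last term (Gibbs' inequality) and summing over `t` telescopes to
`η (KL(π‖μ) - KL(π‖π_{T+1})) ≤ ℓ(π)`, while `ℓ(π_1) = 0`. -/

open Finset

lemma sum_Icc_sub_succ {M : Type*} [AddCommGroup M] {m n : ℕ} (hmn : m ≤ n + 1) (f : ℕ → M) :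
    ∑ i ∈ Icc m n, (f i - f (i + 1)) = f m - f (n + 1) := by
  rw [← Ico_add_one_right_eq_Icc, ← neg_sub, ← sum_Ico_sub (f := f) hmn, ← sum_neg_distrib]
  simp only [neg_sub]

section

open Real

variable {Y : Type*} [Fintype Y]

noncomputable def discreteKLDiv (p q : Y → ℝ) : ℝ := ∑ y, p y * log (p y / q y)

noncomputable def expWeightUpdate (η : ℝ) (p g : Y → ℝ) : Y → ℝ :=
  fun y => p y * exp (g y / η) / ∑ y', p y' * exp (g y' / η)

lemma sub_le_mul_log_div {p q : ℝ} (hp : 0 ≤ p) (hq : 0 < q) : p - q ≤ p * log (p / q) := by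
  have h := mul_le_mul_of_nonneg_left (self_sub_one_le_mul_log (div_nonneg hp hq.le)) hq.le
  rwa [mul_sub, mul_one, mul_div_cancel₀ _ hq.ne', ← mul_assoc, mul_div_cancel₀ _ hq.ne'] at h

lemma mul_log_div_sub_mul_log_div (p : ℝ) {q r : ℝ} (hq : 0 < q) (hr : 0 < r) :
    p * log (p / q) - p * log (p / r) = p * (log r - log q) := by
  rcases eq_or_ne p 0 with rfl | hp
  · simp
  · rw [log_div hp hq.ne', log_div hp hr.ne']; ring

lemma sum_sub_sum_le_discreteKLDiv {p q : Y → ℝ} (hp : ∀ y, 0 ≤ p y) (hq : ∀ y, 0 < q y) :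
    ∑ y, p y - ∑ y, q y ≤ discreteKLDiv p q := by
  rw [← sum_sub_distrib]
  exact sum_le_sum fun y _ => sub_le_mul_log_div (hp y) (hq y)

lemma discreteKLDiv_nonneg {p q : Y → ℝ} (hp : ∀ y, 0 ≤ p y) (hq : ∀ y, 0 < q y)
    (hpq : ∑ y, p y = ∑ y, q y) : 0 ≤ discreteKLDiv p q := by
  simpa [hpq] using sum_sub_sum_le_discreteKLDiv hp hq

lemma discreteKLDiv_self (p : Y → ℝ) : discreteKLDiv p p = 0 := by
  simp [discreteKLDiv]

lemma sum_mul_exp_pos [Nonempty Y] {p : Y → ℝ} (hp : ∀ y, 0 < p y) (g : Y → ℝ) :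
    0 < ∑ y, p y * exp (g y) :=
  sum_pos (fun y _ => mul_pos (hp y) (exp_pos _)) univ_nonempty

variable [Nonempty Y] {η : ℝ} {p : Y → ℝ}

lemma expWeightUpdate_pos (hp : ∀ y, 0 < p y) (g : Y → ℝ) (y : Y) :
    0 < expWeightUpdate η p g y :=
  div_pos (mul_pos (hp y) (exp_pos _)) (sum_mul_exp_pos hp _)

lemma sum_expWeightUpdate (hp : ∀ y, 0 < p y) (g : Y → ℝ) :
    ∑ y, expWeightUpdate η p g y = 1 := by
  simp only [expWeightUpdate]
  rw [← sum_div, div_self (sum_mul_exp_pos hp _).ne']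

lemma log_expWeightUpdate (hp : ∀ y, 0 < p y) (g : Y → ℝ) (y : Y) :
    log (expWeightUpdate η p g y)
      = log (p y) + g y / η - log (∑ y', p y' * exp (g y' / η)) := by
  simp only [expWeightUpdate]
  rw [log_div (mul_pos (hp y) (exp_pos _)).ne' (sum_mul_exp_pos hp _).ne',
    log_mul (hp y).ne' (exp_pos _).ne', log_exp]

lemma inner_sub_expWeightUpdate (hη : η ≠ 0) (hp : ∀ y, 0 < p y) (g : Y → ℝ) {r : Y → ℝ}
    (hr : ∑ y, r y = 1) :
    ∑ y, (r y - expWeightUpdate η p g y) * g y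
      = η * (discreteKLDiv r p - discreteKLDiv r (expWeightUpdate η p g)
          - discreteKLDiv (expWeightUpdate η p g) p) := by
  set u := expWeightUpdate η p g
  set Z := ∑ y', p y' * exp (g y' / η)
  have hu := expWeightUpdate_pos (η := η) hp g
  have hg : ∀ y, g y = η * (log (u y) - log (p y)) + η * log Z := by
    intro y
    rw [log_expWeightUpdate hp g y]
    field_simp
    ring
  have hKL : discreteKLDiv r p - discreteKLDiv r u - discreteKLDiv u p
      = ∑ y, (r y - u y) * (log (u y) - log (p y)) := by
    simp only [discreteKLDiv, ← sum_sub_distrib]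
    refine sum_congr rfl fun y _ => ?_
    rw [mul_log_div_sub_mul_log_div _ (hp y) (hu y), log_div (hu y).ne' (hp y).ne']
    ring
  have hsum : ∑ y, (r y - u y) = 0 := by
    rw [sum_sub_distrib, hr, sum_expWeightUpdate hp]; ring
  simp_rw [hKL, mul_sum, hg, mul_add, sum_add_distrib, ← sum_mul, hsum]
  simp only [zero_mul, add_zero]
  exact sum_congr rfl fun y _ => by ring

lemma inner_sub_expWeightUpdate_le (hη : 0 < η) (hp : ∀ y, 0 < p y) (hp1 : ∑ y, p y = 1)
    (g : Y → ℝ) {r : Y → ℝ} (hr : ∑ y, r y = 1) :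
    ∑ y, (r y - expWeightUpdate η p g y) * g y
      ≤ η * (discreteKLDiv r p - discreteKLDiv r (expWeightUpdate η p g)) := by
  have hKL : 0 ≤ discreteKLDiv (expWeightUpdate η p g) p :=
    discreteKLDiv_nonneg (fun y => (expWeightUpdate_pos hp g y).le) hp
      (by rw [sum_expWeightUpdate hp, hp1])
  rw [inner_sub_expWeightUpdate hη.ne' hp g hr]
  nlinarith

lemma expWeightUpdate_iterates_pos_and_sum_eq_one {πs f : ℕ → Y → ℝ}
    (h1pos : ∀ y, 0 < πs 1 y) (h1sum : ∑ y, πs 1 y = 1)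
    (hupd : ∀ t, 1 ≤ t → πs (t + 1) = expWeightUpdate η (πs t) (f t)) (t : ℕ) (ht : 1 ≤ t) :
    (∀ y, 0 < πs t y) ∧ ∑ y, πs t y = 1 := by
  induction t, ht using Nat.le_induction with
  | base => exact ⟨h1pos, h1sum⟩
  | succ t ht ih =>
    rw [hupd t ht]
    exact ⟨expWeightUpdate_pos ih.1 _, sum_expWeightUpdate ih.1 _⟩

end

/-- (Lemma "no-regret-2") With `ℓ(π) = η·D_KL(π‖μ)`, `π_1 = μ`
and `π_{t+1}(y) ∝ π_t(y)·exp(f_t(y)/η)` for all `t ≥ 1`, every distribution `π`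
on `Y` satisfies
`Σ_{t=1}^T ⟨π − π_t, f_t⟩ ≤ Σ_{t=1}^T ⟨π_{t+1} − π_t, f_t⟩ − ℓ(π_1) + ℓ(π)`. -/
theorem regret_comparison {Y : Type*} [Fintype Y]
    (μ : Y → ℝ) (hμ0 : ∀ y, 0 < μ y) (hμ1 : ∑ y, μ y = 1)
    (η : ℝ) (hη : 0 < η) (T : ℕ)
    (f : ℕ → Y → ℝ)
    (πs : ℕ → Y → ℝ)
    (hinit : πs 1 = μ)
    (hrec : ∀ t, 1 ≤ t → ∀ y,
      πs (t + 1) y = πs t y * Real.exp (f t y / η)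
        / ∑ y', πs t y' * Real.exp (f t y' / η)) :
    ∀ π : Y → ℝ, (∀ y, 0 ≤ π y) → (∑ y, π y = 1) →
      ∑ t ∈ Finset.Icc 1 T, ∑ y, (π y - πs t y) * f t y
        ≤ (∑ t ∈ Finset.Icc 1 T, ∑ y, (πs (t + 1) y - πs t y) * f t y)
          - η * (∑ y, πs 1 y * Real.log (πs 1 y / μ y))
          + η * ∑ y, π y * Real.log (π y / μ y) := by
  intro π hπ0 hπ1
  have : Nonempty Y := by
    by_contra hY
    simp [not_nonempty_iff.mp hY] at hμ1
  have hupd (t : ℕ) (ht : 1 ≤ t) : πs (t + 1) = expWeightUpdate η (πs t) (f t) :=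
    funext (hrec t ht)
  have hdist := expWeightUpdate_iterates_pos_and_sum_eq_one (hinit ▸ hμ0) (hinit ▸ hμ1) hupd
  set K := fun t => discreteKLDiv π (πs t)
  have hstep : ∀ t ∈ Icc 1 T, ∑ y, (π y - πs t y) * f t y
      - ∑ y, (πs (t + 1) y - πs t y) * f t y ≤ η * (K t - K (t + 1)) := by
    intro t ht
    have ht1 := (mem_Icc.mp ht).1
    rw [← sum_sub_distrib]
    simp only [← sub_mul, sub_sub_sub_cancel_right, K, hupd t ht1]
    exact inner_sub_expWeightUpdate_le hη (hdist t ht1).1 (hdist t ht1).2 _ hπ1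
  have hlast : 0 ≤ K (T + 1) :=
    discreteKLDiv_nonneg hπ0 (hdist (T + 1) (by omega)).1 (by rw [hπ1, (hdist _ (by omega)).2])
  have hfirst : K 1 = discreteKLDiv π μ := by simp only [K, hinit]
  have hsum := (sum_le_sum hstep).trans_eq (by rw [← mul_sum, sum_Icc_sub_succ (by omega)])
  rw [sum_sub_distrib, hfirst] at hsum
  change _ ≤ _ - η * discreteKLDiv (πs 1) μ + η * discreteKLDiv π μ
  rw [hinit, discreteKLDiv_self]
  linarith [mul_nonneg hη.le hlast]
end

section
/- Let F be a finite class of functions f: X×Y → ℝ. Let the dataset be drawn as follows: (x_i, y_i, y_i')_{i=1}^n are i.i.d. with x_i ~ ρ and y_i, y_i' independent from π_ref(·|x_i), and conditionally on (x_i, y_i, y_i') the labels o_i ∈ {+, −} are independent with P(o_i = + | x_i, y_i, y_i') = σ(r*(x_i, y_i) − r*(x_i, y_i')); write P_g(+|x,y,y') = σ(g(x,y) − g(x,y')) and P_g(−|x,y,y') = 1 − σ(g(x,y) − g(x,y')). Then for any δ ∈ (0,1), with probability at least 1−δ, simultaneously for all f ∈ F: E_{x~ρ, y1,y2~π_ref(·|x)}[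 D_TV( P_f(·|x,y1,y2), P_{r*}(·|x,y1,y2) )² ] ≤ (1/n)·Σ_{i=1}^n log( P_{r*}(o_i|x_i,y_i,y_i') / P_f(o_i|x_i,y_i,y_i') ) + (4/n)·log(|F|/δ). -/
/-!
Fix `f` and let `A_f = E_{e ~ p}[√(P_f(e) / P_{r*}(e))]` be the Hellinger affinity between the
laws of one labelled sample under `f` and under `r*`. For Bernoulli parameters `a, b` one has
`(a - b)² ≤ 2 - 2(√(ab) + √((1-a)(1-b)))`, so `E[D_TV²] ≤ 2 - 2 A_f ≤ -2 log A_f`.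
The product `∏ᵢ √(P_f / P_{r*})(sᵢ)` has mean `A_fⁿ` under the i.i.d. sample law, so by Markov's
inequality `½ Σᵢ log (P_f / P_{r*})(sᵢ) ≥ t + n log A_f` has probability at most `e^{-t}`;
off this event `-2 log A_f < (1/n) Σᵢ log (P_{r*} / P_f)(sᵢ) + 2t/n`. A union bound over `F`
with `t = log (|F| / δ)` concludes.
-/

open Finset Real

noncomputable def bernoulliAffinity (a b : ℝ) : ℝ := √(a * b) + √((1 - a) * (1 - b))

theorem sq_sub_le_two_sub_two_mul_bernoulliAffinity {a b : ℝ} (ha0 : 0 ≤ a) (ha1 : a ≤ 1)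
    (hb0 : 0 ≤ b) (hb1 : b ≤ 1) : (a - b) ^ 2 ≤ 2 - 2 * bernoulliAffinity a b := by
  have ha1' : 0 ≤ 1 - a := by linarith
  have hb1' : 0 ≤ 1 - b := by linarith
  rw [bernoulliAffinity, sqrt_mul ha0, sqrt_mul ha1']
  set u := √a; set v := √b; set u' := √(1 - a); set v' := √(1 - b)
  have hu : u ^ 2 = a := sq_sqrt ha0
  have hv : v ^ 2 = b := sq_sqrt hb0
  have hu' : u' ^ 2 = 1 - a := sq_sqrt ha1'
  have hv' : v' ^ 2 = 1 - b := sq_sqrt hb1'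
  have hsum : (u + v) * (u' + v') ≤ 2 := by
    nlinarith [sq_nonneg (u - u'), sq_nonneg (u - v'), sq_nonneg (v - u'), sq_nonneg (v - v')]
  -- `a - b = (u - v)(u + v) = -(u' - v')(u' + v')`
  have hfac : (a - b) ^ 2 = -((u - v) * (u' - v')) * ((u + v) * (u' + v')) := by
    linear_combination (u' ^ 2 - v' ^ 2) * (hu - hv) + (a - b) * (hu' - hv')
  have hrhs : 2 - 2 * (u * v + u' * v') = (u - v) ^ 2 + (u' - v') ^ 2 := by
    linear_combination -hu - hv - hu' - hv'
  rw [hfac, hrhs]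
  rcases le_total 0 (-((u - v) * (u' - v'))) with hX | hX
  · nlinarith [mul_le_mul_of_nonneg_left hsum hX, sq_nonneg (u - v + (u' - v'))]
  · nlinarith [mul_nonpos_of_nonpos_of_nonneg hX (by positivity : 0 ≤ (u + v) * (u' + v'))]

section FiniteProbability

variable {Ω ι E : Type*} [Fintype Ω]

theorem sum_filter_le_sum_sum_filter (w : Ω → ℝ) (hw : ∀ s, 0 ≤ w s) (F : Finset ι)
    (P : Ω → Prop) [DecidablePred P] (Q : ι → Ω → Prop) [∀ f, DecidablePred (Q f)]
    (hcover : ∀ s, P s → ∃ f ∈ F, Q f s) :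
    ∑ s ∈ univ.filter P, w s ≤ ∑ f ∈ F, ∑ s ∈ univ.filter (Q f), w s := by
  have hind : ∀ f s, 0 ≤ if Q f s then w s else 0 := fun f s => by split_ifs <;> simp [hw]
  simp only [sum_filter]
  rw [sum_comm]
  refine sum_le_sum fun s _ => ?_
  split_ifs with hP
  · obtain ⟨f, hf, hQ⟩ := hcover s hP
    simpa [hQ] using single_le_sum (fun f _ => hind f s) hf
  · exact sum_nonneg fun f _ => hind f s

theorem one_sub_card_mul_le_sum_filter (w : Ω → ℝ) (hw : ∀ s, 0 ≤ w s) (hw1 : ∑ s, w s = 1)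
    (F : Finset ι) (P : Ω → Prop) [DecidablePred P] (Q : ι → Ω → Prop)
    [∀ f, DecidablePred (Q f)] (hcover : ∀ s, (∀ f ∈ F, ¬ Q f s) → P s) {ε : ℝ}
    (hQ : ∀ f ∈ F, ∑ s ∈ univ.filter (Q f), w s ≤ ε) :
    1 - #F * ε ≤ ∑ s ∈ univ.filter P, w s := by
  have hbad := (sum_filter_le_sum_sum_filter w hw F (¬ P ·) Q fun s hs => by
    by_contra! h
    exact hs (hcover s h)).trans (sum_le_card_nsmul F _ ε hQ)
  have hsplit := sum_filter_add_sum_filter_not univ P w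
  rw [nsmul_eq_mul] at hbad
  linarith

theorem sum_filter_le_sum_mul_div (w X : Ω → ℝ) (hw : ∀ s, 0 ≤ w s) (hX : ∀ s, 0 ≤ X s)
    {c : ℝ} (hc : 0 < c) :
    ∑ s ∈ univ.filter (fun s => c ≤ X s), w s ≤ (∑ s, w s * X s) / c := by
  rw [le_div_iff₀ hc, sum_mul]
  calc ∑ s ∈ univ.filter (fun s => c ≤ X s), w s * c
      ≤ ∑ s ∈ univ.filter (fun s => c ≤ X s), w s * X s :=
        sum_le_sum fun s hs => mul_le_mul_of_nonneg_left (mem_filter.1 hs).2 (hw s)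
    _ ≤ ∑ s, w s * X s :=
        sum_le_sum_of_subset_of_nonneg (filter_subset _ _) fun s _ _ => mul_nonneg (hw s) (hX s)

theorem sum_pi_prod_eq_pow [Fintype ι] [DecidableEq ι] [Fintype E] (q : E → ℝ) :
    ∑ s : ι → E, ∏ i, q (s i) = (∑ e, q e) ^ Fintype.card ι := by
  rw [← Fintype.prod_sum (fun _ => q), prod_const, card_univ]

theorem sum_filter_le_sum_log_le_exp_neg [Fintype ι] [DecidableEq ι] [Fintype E]
    (p g : E → ℝ) (hp : ∀ e, 0 ≤ p e) (hg : ∀ e, 0 < g e) (hA : 0 < ∑ e, p e * g e) (t : ℝ) :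
    ∑ s ∈ univ.filter (fun s : ι → E =>
        t + Fintype.card ι * log (∑ e, p e * g e) ≤ ∑ i, log (g (s i))), ∏ i, p (s i)
      ≤ exp (-t) := by
  set A := ∑ e, p e * g e with hAdef
  have hevent : ∀ s : ι → E, (t + Fintype.card ι * log A ≤ ∑ i, log (g (s i))) ↔
      exp t * A ^ Fintype.card ι ≤ ∏ i, g (s i) := by
    intro s
    rw [← exp_le_exp, exp_sum, exp_add, exp_nat_mul, exp_log hA]
    simp only [exp_log (hg _)]
  simp only [hevent]
  calc _ ≤ (∑ s : ι → E, (∏ i, p (s i)) * ∏ i, g (s i)) / (exp t * A ^ Fintype.card ι) :=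
        sum_filter_le_sum_mul_div _ _ (fun s => prod_nonneg fun i _ => hp _)
          (fun s => prod_nonneg fun i _ => (hg _).le) (by positivity)
    _ = exp (-t) := by
        simp only [← prod_mul_distrib]
        rw [sum_pi_prod_eq_pow (fun e => p e * g e), ← hAdef, exp_neg]
        field_simp

theorem sum_mul_pos_of_sum_pos (p g : Ω → ℝ) (hp : ∀ s, 0 ≤ p s) (hpos : 0 < ∑ s, p s)
    (hg : ∀ s, 0 < g s) : 0 < ∑ s, p s * g s := by
  obtain ⟨s, -, hs⟩ := exists_lt_of_sum_lt (show ∑ _s : Ω, (0 : ℝ) < ∑ s, p s by simpa)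
  exact sum_pos' (fun s _ => mul_nonneg (hp s) (hg s).le) ⟨s, mem_univ s, mul_pos hs (hg s)⟩

end FiniteProbability

section PairExpectation

variable {X Y : Type*} [Fintype X] [Fintype Y] (ρ : X → ℝ) (πref : X → Y → ℝ)

def pairExpect (φ : X → Y → Y → ℝ) : ℝ :=
  ∑ x, ρ x * ∑ y1, ∑ y2, πref x y1 * πref x y2 * φ x y1 y2

theorem pairExpect_mono (hρ0 : ∀ x, 0 ≤ ρ x) (hπref0 : ∀ x y, 0 ≤ πref x y)
    {φ ψ : X → Y → Y → ℝ} (h : ∀ x y1 y2, φ x y1 y2 ≤ ψ x y1 y2) :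
    pairExpect ρ πref φ ≤ pairExpect ρ πref ψ := by
  unfold pairExpect
  gcongr with x _ y1 _ y2 _
  · exact hρ0 x
  · exact mul_nonneg (hπref0 x y1) (hπref0 x y2)
  · exact h x y1 y2

theorem pairExpect_const (hρ1 : ∑ x, ρ x = 1) (hπref1 : ∀ x, ∑ y, πref x y = 1) (c : ℝ) :
    pairExpect ρ πref (fun _ _ _ => c) = c := by
  simp only [pairExpect, ← sum_mul, ← mul_sum, hπref1, mul_one, hρ1, one_mul]

theorem pairExpect_const_sub_mul (hρ1 : ∑ x, ρ x = 1) (hπref1 : ∀ x, ∑ y, πref x y = 1)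
    (c d : ℝ) (φ : X → Y → Y → ℝ) :
    pairExpect ρ πref (fun x y1 y2 => c - d * φ x y1 y2) = c - d * pairExpect ρ πref φ := by
  simp only [pairExpect, mul_sub, sum_sub_distrib, mul_left_comm _ d, ← mul_sum, ← sum_mul,
    hπref1, mul_one, hρ1, one_mul]

theorem sum_mul_eq_pairExpect (G : X × Y × Y × Bool → ℝ) :
    ∑ e, ρ e.1 * πref e.1 e.2.1 * πref e.1 e.2.2.1 * G e =
      pairExpect ρ πref (fun x y1 y2 => G (x, y1, y2, true) + G (x, y1, y2, false)) := by
  simp only [Fintype.sum_prod_type, Fintype.sum_bool, pairExpect, mul_sum]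
  exact sum_congr rfl fun x _ => sum_congr rfl fun y1 _ => sum_congr rfl fun y2 _ => by ring

end PairExpectation

theorem natCast_mul_exp_neg_log_div_le (k : ℕ) {δ : ℝ} (hδ : 0 < δ) :
    k * exp (-log (k / δ)) ≤ δ := by
  rcases Nat.eq_zero_or_pos k with rfl | hk
  · simp [hδ.le]
  · rw [exp_neg, exp_log (by positivity), inv_div]
    exact (mul_div_cancel₀ δ (by positivity)).le

theorem log_sqrt_div {a b : ℝ} (ha : 0 < a) (hb : 0 < b) : log √(a / b) = -log (b / a) / 2 := by
  rw [log_sqrt (div_pos ha hb).le, ← log_inv, inv_div]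

theorem mul_sqrt_div_eq_sqrt_mul {a b : ℝ} (ha : 0 ≤ a) (hb : 0 ≤ b) :
    b * √(a / b) = √(a * b) := by
  rw [sqrt_div' a hb, mul_div_left_comm, div_sqrt, sqrt_mul ha]

theorem le_of_neg_half_lt_add_mul_log {n : ℕ} (hn : 0 < n) {A D L t : ℝ} (hA : 0 < A)
    (ht : 0 ≤ t) (hD : D ≤ 2 - 2 * A) (hL : -L / 2 < t + n * log A) :
    D ≤ 1 / n * L + 4 / n * t := by
  have hn' : (0 : ℝ) < n := mod_cast hn
  have hDlog : D ≤ -2 * log A := by linarith [log_le_sub_one_of_pos hA]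
  rw [one_div_mul_eq_div, div_mul_eq_mul_div, ← add_div, le_div_iff₀ hn']
  nlinarith [mul_le_mul_of_nonneg_right hDlog hn'.le]

section BradleyTerry

variable {X Y : Type*}

def labelProb (σ : ℝ → ℝ) (h : X → Y → ℝ) (e : X × Y × Y × Bool) : ℝ :=
  if e.2.2.2 then σ (h e.1 e.2.1 - h e.1 e.2.2.1) else 1 - σ (h e.1 e.2.1 - h e.1 e.2.2.1)

def sampleWeight (ρ : X → ℝ) (πref : X → Y → ℝ) (σ : ℝ → ℝ) (r : X → Y → ℝ)
    (e : X × Y × Y × Bool) : ℝ :=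
  ρ e.1 * πref e.1 e.2.1 * πref e.1 e.2.2.1 * labelProb σ r e

variable {ρ : X → ℝ} {πref : X → Y → ℝ} {σ : ℝ → ℝ}

theorem labelProb_pos (hσ0 : ∀ z, 0 < σ z) (hσ1 : ∀ z, σ z < 1) (h : X → Y → ℝ)
    (e : X × Y × Y × Bool) : 0 < labelProb σ h e := by
  unfold labelProb
  split_ifs
  · exact hσ0 _
  · linarith [hσ1 (h e.1 e.2.1 - h e.1 e.2.2.1)]

theorem sampleWeight_nonneg (hρ0 : ∀ x, 0 ≤ ρ x) (hπref0 : ∀ x y, 0 ≤ πref x y)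
    (hσ0 : ∀ z, 0 < σ z) (hσ1 : ∀ z, σ z < 1) (r : X → Y → ℝ) (e : X × Y × Y × Bool) :
    0 ≤ sampleWeight ρ πref σ r e := by
  have := labelProb_pos hσ0 hσ1 r e
  have := hρ0 e.1
  have := hπref0 e.1 e.2.1
  have := hπref0 e.1 e.2.2.1
  unfold sampleWeight
  positivity

variable [Fintype X] [Fintype Y]

variable (ρ πref σ) in
noncomputable def sampleAffinity (f r : X → Y → ℝ) : ℝ :=
  ∑ e, sampleWeight ρ πref σ r e * √(labelProb σ f e / labelProb σ r e)

theorem sum_sampleWeight (hρ1 : ∑ x, ρ x = 1) (hπref1 : ∀ x, ∑ y, πref x y = 1)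
    (r : X → Y → ℝ) : ∑ e, sampleWeight ρ πref σ r e = 1 := by
  refine (sum_mul_eq_pairExpect ρ πref (labelProb σ r)).trans ?_
  simp only [labelProb, if_true, Bool.false_eq_true, if_false, add_sub_cancel]
  exact pairExpect_const ρ πref hρ1 hπref1 1

theorem sampleAffinity_eq_pairExpect (hσ0 : ∀ z, 0 < σ z) (hσ1 : ∀ z, σ z < 1)
    (f r : X → Y → ℝ) : sampleAffinity ρ πref σ f r = pairExpect ρ πref
      (fun x y1 y2 => bernoulliAffinity (σ (f x y1 - f x y2)) (σ (r x y1 - r x y2))) := by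
  simp only [sampleAffinity, sampleWeight, mul_assoc _ (labelProb σ r _), sum_mul_eq_pairExpect]
  congr 1
  funext x y1 y2
  simp only [labelProb, if_true, Bool.false_eq_true, if_false]
  rw [mul_sqrt_div_eq_sqrt_mul (hσ0 _).le (hσ0 _).le,
    mul_sqrt_div_eq_sqrt_mul (sub_nonneg.2 (hσ1 _).le) (sub_nonneg.2 (hσ1 _).le), bernoulliAffinity]

theorem pairExpect_sq_sub_le_two_sub_two_mul_sampleAffinity (hρ0 : ∀ x, 0 ≤ ρ x)
    (hρ1 : ∑ x, ρ x = 1) (hπref0 : ∀ x y, 0 ≤ πref x y) (hπref1 : ∀ x, ∑ y, πref x y = 1)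
    (hσ0 : ∀ z, 0 < σ z) (hσ1 : ∀ z, σ z < 1) (f r : X → Y → ℝ) :
    pairExpect ρ πref (fun x y1 y2 => (σ (f x y1 - f x y2) - σ (r x y1 - r x y2)) ^ 2)
      ≤ 2 - 2 * sampleAffinity ρ πref σ f r := by
  rw [sampleAffinity_eq_pairExpect hσ0 hσ1, ← pairExpect_const_sub_mul ρ πref hρ1 hπref1]
  exact pairExpect_mono ρ πref hρ0 hπref0 fun x y1 y2 =>
    sq_sub_le_two_sub_two_mul_bernoulliAffinity (hσ0 _).le (hσ1 _).le (hσ0 _).le (hσ1 _).le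

end BradleyTerry

open scoped Classical in
/-- (Lemma "MLE-TV") For the Bradley–Terry data-generating
process (samples in `X × Y × Y × Bool`, `Bool` encoding the label `o`, `true = +`,
with single-sample probability `p` and i.i.d. product weights), for any
`δ ∈ (0,1)`, with probability at least `1−δ`, simultaneously for all `f ∈ F`:
`E_{x~ρ, y1,y2~π_ref}[ D_TV(P_f(·|x,y1,y2), P_{r*}(·|x,y1,y2))² ]
  ≤ (1/n)·Σ_i log(P_{r*}(o_i|·)/P_f(o_i|·)) + (4/n)·log(|F|/δ)`,
where `D_TV(P_f, P_{r*}) = |P_f(+) − P_{r*}(+)| = |σ(f(x,y1)−f(x,y2)) − σ(r*(x,y1)−r*(x,y2))|`. -/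
theorem mle_tv_bound {X Y : Type*} [Fintype X] [Fintype Y]
    (ρ : X → ℝ) (hρ0 : ∀ x, 0 ≤ ρ x) (hρ1 : ∑ x, ρ x = 1)
    (πref : X → Y → ℝ) (hπref0 : ∀ x y, 0 ≤ πref x y) (hπref1 : ∀ x, ∑ y, πref x y = 1)
    (rstar : X → Y → ℝ) (FF : Finset (X → Y → ℝ)) (n : ℕ) (hn : 0 < n)
    (δ : ℝ) (hδ0 : 0 < δ) (hδ1 : δ < 1) :
    let σ : ℝ → ℝ := fun z => 1 / (1 + Real.exp (-z));
    let P : (X → Y → ℝ) → X × Y × Y × Bool → ℝ := fun h e =>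
      if e.2.2.2 then σ (h e.1 e.2.1 - h e.1 e.2.2.1)
      else 1 - σ (h e.1 e.2.1 - h e.1 e.2.2.1);
    let p : X × Y × Y × Bool → ℝ := fun e =>
      ρ e.1 * πref e.1 e.2.1 * πref e.1 e.2.2.1 * P rstar e;
    1 - δ ≤ ∑ s ∈ Finset.univ.filter (fun s : Fin n → X × Y × Y × Bool =>
        ∀ f ∈ FF,
          ∑ x, ρ x * ∑ y1, ∑ y2, πref x y1 * πref x y2 *
              (σ (f x y1 - f x y2) - σ (rstar x y1 - rstar x y2)) ^ 2
            ≤ ((1 : ℝ) / n) * ∑ i, Real.log (P rstar (s i) / P f (s i))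
              + ((4 : ℝ) / n) * Real.log (FF.card / δ)),
      ∏ i, p (s i) := by
  intro σ P p
  have hσ (z : ℝ) : σ z = sigmoid z := one_div _
  have hσ0 (z : ℝ) : 0 < σ z := hσ z ▸ sigmoid_pos z
  have hσ1 (z : ℝ) : σ z < 1 := hσ z ▸ sigmoid_lt_one z
  have hP : ∀ h e, 0 < P h e := labelProb_pos hσ0 hσ1
  have hp : ∀ e, 0 ≤ p e := sampleWeight_nonneg hρ0 hπref0 hσ0 hσ1 rstar
  have hp1 : ∑ e, p e = 1 := sum_sampleWeight hρ1 hπref1 rstar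
  have hA (f : X → Y → ℝ) : 0 < sampleAffinity ρ πref σ f rstar :=
    sum_mul_pos_of_sum_pos _ _ hp (hp1 ▸ one_pos) fun e => sqrt_pos.2 (div_pos (hP f e) (hP rstar e))
  set t := log (FF.card / δ)
  have hchernoff : ∀ f ∈ FF, ∑ s ∈ univ.filter (fun s : Fin n → X × Y × Y × Bool =>
      t + Fintype.card (Fin n) * log (sampleAffinity ρ πref σ f rstar)
        ≤ ∑ i, log √(P f (s i) / P rstar (s i))), ∏ i, p (s i) ≤ exp (-t) := fun f _ =>
    sum_filter_le_sum_log_le_exp_neg p _ hp (fun e => sqrt_pos.2 (div_pos (hP f e) (hP rstar e)))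
      (hA f) t
  refine le_trans ?_ (one_sub_card_mul_le_sum_filter _ (fun s => prod_nonneg fun i _ => hp (s i))
    (by rw [sum_pi_prod_eq_pow, hp1, one_pow]) FF _ _ ?_ hchernoff)
  · linarith [natCast_mul_exp_neg_log_div_le FF.card hδ0]
  intro s hs f hf
  have ht : 0 ≤ t := by
    have : (1 : ℝ) ≤ FF.card := mod_cast card_pos.2 ⟨f, hf⟩
    exact log_nonneg ((one_le_div hδ0).2 (by linarith))
  have hlt := not_le.1 (hs f hf)
  simp only [log_sqrt_div (hP f _) (hP rstar _), ← sum_div, sum_neg_distrib, Fintype.card_fin] at hlt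
  exact le_of_neg_half_lt_add_mul_log hn (hA f) ht
    (pairExpect_sq_sub_le_two_sub_two_mul_sampleAffinity hρ0 hρ1 hπref0 hπref1 hσ0 hσ1 f rstar) hlt
end

section
/- Let F be a finite class of functions f: X×Y → ℝ with ||f||_∞ ≤ R for all f ∈ F and r* ∈ F. Let the dataset D = {(x_i, y_i^w, y_i^l)}_{i=1}^n be drawn i.i.d.: x_i ~ ρ, two responses drawn independently from π_ref(·|x_i), with the preferred one y_i^w labeled according to the Bradley–Terry model P(y ≻ y' | x) = σ(r*(x,y) − r*(x,y')). Let f̂ ∈ argmin_{f∈F} E_D(f), where E_D(f) = −(1/n)·Σ_{i=1}^n log σ(f(x_i,y_i^w) − f(x_i,y_i^l)), and let κ = 1/(min_{z∈[−2R,2R]} σ'(z)). Then there is an absolute constant C > 0 such that for any δ ∈ (0,1), with probability at least 1−δ: E_{x~ρ, y1,y2~π_ref(·|x)}[ ( r*(x,y1) − r*(x,y2) − f̂(x,y1) + f̂(x,y2) )² ] ≤ C·(κ²/n)·log(|F|/δ). -/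
/-!
Write `p_f` for the law of one labelled sample when the labels follow the Bradley–Terry model
with reward `f`, and `BC` for the Bhattacharyya coefficient. Since `f̂` maximises the likelihood,
`f̂ = f` forces `∏ p_{r*} ≤ ∏ p_f` on the sample, an event of probability at most
`BC(p_{r*}, p_f) ^ n ≤ exp (-n (1 - BC))`. A union bound over `F` shows that with probability
at least `1 - δ`, `1 - BC(p_{r*}, p_{f̂}) ≤ log (|F| / δ) / n`.

On the other hand all reward differences lie in `[-2R, 2R]`, where the slope of `σ` is at least
`1 / κ`, so `(Δr* - Δf)² ≤ κ² (σ Δr* - σ Δf)² ≤ 8 κ² (1 - BC)` for the two label distributions;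
averaging over the prompt and the responses bounds the squared error by
`8 κ² (1 - BC(p_{r*}, p_f))`. Hence `C = 8`.
-/

open Finset Real

noncomputable def sigmoidDerivMin (c : ℝ) : ℝ :=
  sInf ((fun z => sigmoid z * (1 - sigmoid z)) '' Set.Icc (-c) c)

lemma sigmoid_mul_one_sub_pos (z : ℝ) : 0 < sigmoid z * (1 - sigmoid z) :=
  mul_pos (sigmoid_pos z) (sub_pos.2 (sigmoid_lt_one z))

lemma sigmoidDerivMin_pos {c : ℝ} (hc : 0 ≤ c) : 0 < sigmoidDerivMin c := by
  obtain ⟨z, -, hz⟩ := (isCompact_Icc.image (by fun_prop)).sInf_mem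
    ((Set.nonempty_Icc.2 (neg_le_self hc)).image fun z => sigmoid z * (1 - sigmoid z))
  rw [sigmoidDerivMin, ← hz]
  exact sigmoid_mul_one_sub_pos z

lemma sigmoidDerivMin_le {c z : ℝ} (hz : z ∈ Set.Icc (-c) c) :
    sigmoidDerivMin c ≤ sigmoid z * (1 - sigmoid z) :=
  csInf_le ⟨0, by rintro _ ⟨w, -, rfl⟩; exact (sigmoid_mul_one_sub_pos w).le⟩ ⟨z, hz, rfl⟩

lemma sigmoidDerivMin_mul_abs_sub_le {c a b : ℝ} (ha : a ∈ Set.Icc (-c) c)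
    (hb : b ∈ Set.Icc (-c) c) : sigmoidDerivMin c * |a - b| ≤ |sigmoid a - sigmoid b| := by
  wlog hba : b ≤ a generalizing a b
  · rw [abs_sub_comm, abs_sub_comm (sigmoid a)]
    exact this hb ha (le_of_not_ge hba)
  rw [abs_of_nonneg (sub_nonneg.2 hba), abs_of_nonneg (sub_nonneg.2 (sigmoid_le hba))]
  refine (convex_Icc (-c) c).mul_sub_le_image_sub_of_le_deriv continuous_sigmoid.continuousOn
    differentiable_sigmoid.differentiableOn (fun z hz => ?_) b hb a ha hba
  rw [deriv_sigmoid]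
  exact sigmoidDerivMin_le (interior_subset hz)

noncomputable def bhattacharyyaBernoulli (a b : ℝ) : ℝ := √(a * b) + √((1 - a) * (1 - b))

lemma sq_sub_le_eight_mul_one_sub_bhattacharyyaBernoulli {a b : ℝ} (ha₀ : 0 ≤ a) (ha₁ : a ≤ 1)
    (hb₀ : 0 ≤ b) (hb₁ : b ≤ 1) : (a - b) ^ 2 ≤ 8 * (1 - bhattacharyyaBernoulli a b) := by
  have hu := Real.sq_sqrt ha₀
  have hv := Real.sq_sqrt hb₀
  have hu' := Real.sq_sqrt (sub_nonneg.2 ha₁)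
  have hv' := Real.sq_sqrt (sub_nonneg.2 hb₁)
  rw [bhattacharyyaBernoulli, Real.sqrt_mul ha₀, Real.sqrt_mul (sub_nonneg.2 ha₁)]
  have hsum : √a + √b ≤ 2 := by
    nlinarith [Real.sqrt_le_one.2 ha₁, Real.sqrt_le_one.2 hb₁]
  -- `1 - bhattacharyyaBernoulli a b` is half the sum of the two squared differences of roots
  calc (a - b) ^ 2
      = (√a - √b) ^ 2 * (√a + √b) ^ 2 := by
        linear_combination (-(√a ^ 2 - √b ^ 2 + a - b)) * (hu - hv)
    _ ≤ (√a - √b) ^ 2 * 2 ^ 2 := by gcongr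
    _ ≤ 4 * ((√a - √b) ^ 2 + (√(1 - a) - √(1 - b)) ^ 2) := by
        nlinarith [sq_nonneg (√(1 - a) - √(1 - b))]
    _ = 8 * (1 - (√a * √b + √(1 - a) * √(1 - b))) := by linear_combination 4 * (hu + hv + hu' + hv')

lemma sq_sub_le_of_mem_Icc {c a b : ℝ} (ha : a ∈ Set.Icc (-c) c) (hb : b ∈ Set.Icc (-c) c) :
    (a - b) ^ 2 ≤ 8 * (1 / sigmoidDerivMin c) ^ 2 *
      (1 - bhattacharyyaBernoulli (sigmoid a) (sigmoid b)) := by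
  have hm := sigmoidDerivMin_pos (c := c) (by linarith [ha.1, ha.2])
  have hlip : (sigmoidDerivMin c * |a - b|) ^ 2 ≤ (sigmoid a - sigmoid b) ^ 2 := by
    rw [← sq_abs (sigmoid a - sigmoid b)]
    exact pow_le_pow_left₀ (by positivity) (sigmoidDerivMin_mul_abs_sub_le ha hb) 2
  have hhel := sq_sub_le_eight_mul_one_sub_bhattacharyyaBernoulli (sigmoid_nonneg a)
    (sigmoid_le_one a) (sigmoid_nonneg b) (sigmoid_le_one b)
  rw [mul_pow, sq_abs] at hlip
  rw [div_pow, one_pow, mul_comm 8, mul_assoc, one_div_mul_eq_div, le_div_iff₀ (by positivity)]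
  linarith

noncomputable def bhattacharyya {Ω : Type*} [Fintype Ω] (p q : Ω → ℝ) : ℝ :=
  ∑ e, √(p e * q e)

section Bhattacharyya

variable {Ω : Type*} [Fintype Ω] {p q : Ω → ℝ}

lemma bhattacharyya_nonneg : 0 ≤ bhattacharyya p q :=
  sum_nonneg fun _ _ => Real.sqrt_nonneg _

/-- On the event, `∏ p ≤ √(∏ p · ∏ q)`, and the right-hand side sums to `(bhattacharyya p q) ^ n`
over all samples. -/
lemma sum_filter_prod_le_prod_le_bhattacharyya_pow (hp : ∀ e, 0 ≤ p e) (hq : ∀ e, 0 ≤ q e)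
    (n : ℕ) :
    ∑ s : Fin n → Ω with ∏ i, p (s i) ≤ ∏ i, q (s i), ∏ i, p (s i) ≤ bhattacharyya p q ^ n := by
  have hpq : ∀ e, 0 ≤ p e * q e := fun e => mul_nonneg (hp e) (hq e)
  calc ∑ s : Fin n → Ω with ∏ i, p (s i) ≤ ∏ i, q (s i), ∏ i, p (s i)
      ≤ ∑ s : Fin n → Ω with ∏ i, p (s i) ≤ ∏ i, q (s i), ∏ i, √(p (s i) * q (s i)) := by
        refine sum_le_sum fun s hs => ?_
        have hP : 0 ≤ ∏ i, p (s i) := prod_nonneg fun i _ => hp _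
        rw [← Real.sqrt_prod _ fun i _ => hpq _, prod_mul_distrib]
        exact Real.le_sqrt_of_sq_le ((sq _).trans_le
          (mul_le_mul_of_nonneg_left (mem_filter.1 hs).2 hP))
    _ ≤ ∑ s : Fin n → Ω, ∏ i, √(p (s i) * q (s i)) :=
        sum_le_sum_of_subset_of_nonneg (filter_subset _ _)
          fun _ _ _ => prod_nonneg fun _ _ => Real.sqrt_nonneg _
    _ = bhattacharyya p q ^ n := by
        rw [bhattacharyya, sum_pow', Fintype.piFinset_univ]

end Bhattacharyya

section MLE

variable {Ω β : Type*} [Fintype Ω] {p : Ω → ℝ} {q : β → Ω → ℝ}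

/-- An empirical likelihood maximiser over a finite class `F` can only land on a candidate `f`
far from `p` on the event `∏ p ≤ ∏ q f`, whose probability is at most `(1 - t) ^ n`. -/
theorem sum_filter_bhattacharyya_lt_le {n : ℕ} {F : Finset β} (hp : ∀ e, 0 ≤ p e)
    (hq : ∀ f e, 0 ≤ q f e) {fhat : (Fin n → Ω) → β} (hfhat : ∀ s, fhat s ∈ F)
    (hmle : ∀ s, ∏ i, p (s i) ≤ ∏ i, q (fhat s) (s i)) (t : ℝ) :
    ∑ s : Fin n → Ω with bhattacharyya p (q (fhat s)) < 1 - t, ∏ i, p (s i)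
      ≤ #F * Real.exp (-(n * t)) := by
  classical
  set far := F.filter fun f => bhattacharyya p (q f) < 1 - t
  have hmaps : ∀ s ∈ univ.filter fun s : Fin n → Ω => bhattacharyya p (q (fhat s)) < 1 - t,
      fhat s ∈ far := fun s hs => mem_filter.2 ⟨hfhat s, (mem_filter.1 hs).2⟩
  have hP : ∀ s : Fin n → Ω, 0 ≤ ∏ i, p (s i) := fun s => prod_nonneg fun i _ => hp _
  rw [← sum_fiberwise_of_maps_to hmaps]
  calc _ ≤ ∑ f ∈ far, ∑ s : Fin n → Ω with ∏ i, p (s i) ≤ ∏ i, q f (s i), ∏ i, p (s i) := by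
        refine sum_le_sum fun f _ => sum_le_sum_of_subset_of_nonneg ?_ fun s _ _ => hP s
        intro s hs
        obtain rfl := (mem_filter.1 hs).2
        exact mem_filter.2 ⟨mem_univ _, hmle s⟩
    _ ≤ ∑ f ∈ far, Real.exp (-(n * t)) := by
        refine sum_le_sum fun f hf => ?_
        have hfar := (mem_filter.1 hf).2
        calc _ ≤ bhattacharyya p (q f) ^ n :=
              sum_filter_prod_le_prod_le_bhattacharyya_pow hp (hq f) n
          _ ≤ (1 - t) ^ n := pow_le_pow_left₀ bhattacharyya_nonneg hfar.le n
          _ ≤ Real.exp (-t) ^ n := by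
              gcongr
              · exact bhattacharyya_nonneg.trans hfar.le
              · linarith [Real.add_one_le_exp (-t)]
          _ = Real.exp (-(n * t)) := by rw [← Real.exp_nat_mul, mul_neg]
    _ ≤ #F * Real.exp (-(n * t)) := by
        rw [sum_const, nsmul_eq_mul]
        gcongr
        exact filter_subset _ _

end MLE

namespace BradleyTerry

variable {X Y : Type*} {ρ : X → ℝ} {πref : X → Y → ℝ}

/-- A sample `(x, y, y', b)` records the prompt, the two responses, and whether `y` won. -/
def winner (e : X × Y × Y × Bool) : Y := if e.2.2.2 then e.2.1 else e.2.2.1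

def loser (e : X × Y × Y × Bool) : Y := if e.2.2.2 then e.2.2.1 else e.2.1

noncomputable def labelProb (f : X → Y → ℝ) (e : X × Y × Y × Bool) : ℝ :=
  if e.2.2.2 then sigmoid (f e.1 e.2.1 - f e.1 e.2.2.1)
  else 1 - sigmoid (f e.1 e.2.1 - f e.1 e.2.2.1)

def pairWeight (ρ : X → ℝ) (πref : X → Y → ℝ) (x : X) (y₁ y₂ : Y) : ℝ :=
  ρ x * πref x y₁ * πref x y₂

noncomputable def model (ρ : X → ℝ) (πref : X → Y → ℝ) (f : X → Y → ℝ)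
    (e : X × Y × Y × Bool) : ℝ :=
  pairWeight ρ πref e.1 e.2.1 e.2.2.1 * labelProb f e

noncomputable def empiricalLoss {n : ℕ} (f : X → Y → ℝ) (s : Fin n → X × Y × Y × Bool) : ℝ :=
  -((1 : ℝ) / n) * ∑ i, Real.log (sigmoid (f (s i).1 (winner (s i)) - f (s i).1 (loser (s i))))

lemma sigmoid_winner_sub_loser (f : X → Y → ℝ) (e : X × Y × Y × Bool) :
    sigmoid (f e.1 (winner e) - f e.1 (loser e)) = labelProb f e := by
  obtain ⟨x, y₁, y₂, _ | _⟩ := e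
  · rw [winner, loser, labelProb, if_neg Bool.false_ne_true, if_neg Bool.false_ne_true,
      if_neg Bool.false_ne_true, ← sigmoid_neg, neg_sub]
  · rfl

lemma labelProb_pos (f : X → Y → ℝ) (e : X × Y × Y × Bool) : 0 < labelProb f e :=
  sigmoid_winner_sub_loser f e ▸ sigmoid_pos _

lemma pairWeight_nonneg (hρ : ∀ x, 0 ≤ ρ x) (hπ : ∀ x y, 0 ≤ πref x y) (x : X) (y₁ y₂ : Y) :
    0 ≤ pairWeight ρ πref x y₁ y₂ :=
  mul_nonneg (mul_nonneg (hρ x) (hπ x y₁)) (hπ x y₂)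

lemma model_nonneg (hρ : ∀ x, 0 ≤ ρ x) (hπ : ∀ x y, 0 ≤ πref x y) (f : X → Y → ℝ)
    (e : X × Y × Y × Bool) : 0 ≤ model ρ πref f e :=
  mul_nonneg (pairWeight_nonneg hρ hπ _ _ _) (labelProb_pos f e).le

lemma prod_model_le_of_empiricalLoss_le {n : ℕ} (hn : 0 < n) (hρ : ∀ x, 0 ≤ ρ x)
    (hπ : ∀ x y, 0 ≤ πref x y) {f g : X → Y → ℝ} {s : Fin n → X × Y × Y × Bool}
    (h : empiricalLoss g s ≤ empiricalLoss f s) :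
    ∏ i, model ρ πref f (s i) ≤ ∏ i, model ρ πref g (s i) := by
  have hlog : ∑ i, Real.log (labelProb f (s i)) ≤ ∑ i, Real.log (labelProb g (s i)) := by
    simp only [empiricalLoss, sigmoid_winner_sub_loser, neg_mul, neg_le_neg_iff] at h
    exact le_of_mul_le_mul_left h (by positivity)
  have hlabel : ∏ i, labelProb f (s i) ≤ ∏ i, labelProb g (s i) := by
    have hpos : ∀ f, 0 < ∏ i, labelProb f (s i) := fun f => prod_pos fun i _ => labelProb_pos f _
    rwa [← Real.log_le_log_iff (hpos f) (hpos g), Real.log_prod fun i _ => (labelProb_pos f _).ne',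
      Real.log_prod fun i _ => (labelProb_pos g _).ne']
  simp only [model, prod_mul_distrib]
  exact mul_le_mul_of_nonneg_left hlabel (prod_nonneg fun i _ => pairWeight_nonneg hρ hπ _ _ _)

variable [Fintype X] [Fintype Y]

noncomputable def pairwiseError (ρ : X → ℝ) (πref : X → Y → ℝ) (r f : X → Y → ℝ) : ℝ :=
  ∑ x, ρ x * ∑ y₁, ∑ y₂, πref x y₁ * πref x y₂ * (r x y₁ - r x y₂ - f x y₁ + f x y₂) ^ 2

lemma sum_sample_eq (g : X × Y × Y × Bool → ℝ) :
    ∑ e, g e = ∑ x, ∑ y₁, ∑ y₂, (g (x, y₁, y₂, true) + g (x, y₁, y₂, false)) := by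
  simp only [Fintype.sum_prod_type, Fintype.sum_bool]

lemma sum_pairWeight (hρ₁ : ∑ x, ρ x = 1) (hπ₁ : ∀ x, ∑ y, πref x y = 1) :
    ∑ x, ∑ y₁, ∑ y₂, pairWeight ρ πref x y₁ y₂ = 1 := by
  simp only [pairWeight, ← mul_sum, hπ₁, mul_one, hρ₁]

lemma sum_model (hρ₁ : ∑ x, ρ x = 1) (hπ₁ : ∀ x, ∑ y, πref x y = 1) (f : X → Y → ℝ) :
    ∑ e, model ρ πref f e = 1 := by
  rw [sum_sample_eq, ← sum_pairWeight hρ₁ hπ₁]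
  simp only [model, labelProb, if_true, Bool.false_eq_true, if_false, ← mul_add,
    add_sub_cancel, mul_one]

lemma bhattacharyya_model (hρ : ∀ x, 0 ≤ ρ x) (hπ : ∀ x y, 0 ≤ πref x y) (r f : X → Y → ℝ) :
    bhattacharyya (model ρ πref r) (model ρ πref f) =
      ∑ x, ∑ y₁, ∑ y₂, pairWeight ρ πref x y₁ y₂ *
        bhattacharyyaBernoulli (sigmoid (r x y₁ - r x y₂)) (sigmoid (f x y₁ - f x y₂)) := by
  rw [bhattacharyya, sum_sample_eq]
  refine sum_congr rfl fun x _ => sum_congr rfl fun y₁ _ => sum_congr rfl fun y₂ _ => ?_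
  have hw := pairWeight_nonneg hρ hπ x y₁ y₂
  simp only [model, labelProb, if_true, Bool.false_eq_true, if_false]
  rw [bhattacharyyaBernoulli, mul_add, mul_mul_mul_comm, Real.sqrt_mul (mul_self_nonneg _),
    Real.sqrt_mul_self hw, mul_mul_mul_comm, Real.sqrt_mul (mul_self_nonneg _),
    Real.sqrt_mul_self hw]

lemma pairwiseError_le (hρ : ∀ x, 0 ≤ ρ x) (hρ₁ : ∑ x, ρ x = 1) (hπ : ∀ x y, 0 ≤ πref x y)
    (hπ₁ : ∀ x, ∑ y, πref x y = 1) {R : ℝ} {r f : X → Y → ℝ} (hr : ∀ x y, |r x y| ≤ R)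
    (hf : ∀ x y, |f x y| ≤ R) :
    pairwiseError ρ πref r f ≤
      8 * (1 / sigmoidDerivMin (2 * R)) ^ 2 *
        (1 - bhattacharyya (model ρ πref r) (model ρ πref f)) := by
  have hdiff : ∀ g : X → Y → ℝ, (∀ x y, |g x y| ≤ R) → ∀ x y₁ y₂,
      g x y₁ - g x y₂ ∈ Set.Icc (-(2 * R)) (2 * R) := fun g hg x y₁ y₂ => by
    have h₁ := abs_le.1 (hg x y₁)
    have h₂ := abs_le.1 (hg x y₂)
    constructor <;> linarith [h₁.1, h₁.2, h₂.1, h₂.2]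
  rw [bhattacharyya_model hρ hπ]
  calc pairwiseError ρ πref r f
      = ∑ x, ∑ y₁, ∑ y₂, pairWeight ρ πref x y₁ y₂ *
          ((r x y₁ - r x y₂) - (f x y₁ - f x y₂)) ^ 2 := by
        simp only [pairwiseError, pairWeight, mul_sum]
        exact sum_congr rfl fun x _ => sum_congr rfl fun y₁ _ => sum_congr rfl fun y₂ _ => by ring
    _ ≤ ∑ x, ∑ y₁, ∑ y₂, pairWeight ρ πref x y₁ y₂ *
          (8 * (1 / sigmoidDerivMin (2 * R)) ^ 2 *
            (1 - bhattacharyyaBernoulli (sigmoid (r x y₁ - r x y₂))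
              (sigmoid (f x y₁ - f x y₂)))) := by
        gcongr with x _ y₁ _ y₂ _
        · exact pairWeight_nonneg hρ hπ x y₁ y₂
        · exact sq_sub_le_of_mem_Icc (hdiff r hr x y₁ y₂) (hdiff f hf x y₁ y₂)
    _ = _ := by
        simp only [mul_left_comm _ (8 * (1 / sigmoidDerivMin (2 * R)) ^ 2), ← mul_sum]
        simp only [mul_one_sub, sum_sub_distrib, sum_pairWeight hρ₁ hπ₁]

theorem one_sub_le_sum_filter_pairwiseError_le {FF : Finset (X → Y → ℝ)} {R δ : ℝ} {n : ℕ}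
    {rstar : X → Y → ℝ} {fhat : (Fin n → X × Y × Y × Bool) → X → Y → ℝ}
    (hρ : ∀ x, 0 ≤ ρ x) (hρ₁ : ∑ x, ρ x = 1) (hπ : ∀ x y, 0 ≤ πref x y)
    (hπ₁ : ∀ x, ∑ y, πref x y = 1) (hrF : rstar ∈ FF) (hFR : ∀ f ∈ FF, ∀ x y, |f x y| ≤ R)
    (hrR : ∀ x y, |rstar x y| ≤ R) (hn : 0 < n) (hδ : 0 < δ)
    (hmin : ∀ s, fhat s ∈ FF ∧ ∀ f ∈ FF, empiricalLoss (fhat s) s ≤ empiricalLoss f s) :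
    1 - δ ≤ ∑ s : Fin n → X × Y × Y × Bool with pairwiseError ρ πref rstar (fhat s) ≤
        8 * ((1 / sigmoidDerivMin (2 * R)) ^ 2 / n) * Real.log (#FF / δ),
      ∏ i, model ρ πref rstar (s i) := by
  set p := model ρ πref rstar
  set t := Real.log (#FF / δ) / n with ht
  have htail : ∑ s : Fin n → X × Y × Y × Bool with
      bhattacharyya p (model ρ πref (fhat s)) < 1 - t, ∏ i, p (s i) ≤ δ := by
    have hcard : (0 : ℝ) < #FF := Nat.cast_pos.2 (card_pos.2 ⟨rstar, hrF⟩)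
    calc _ ≤ #FF * Real.exp (-(n * t)) :=
          sum_filter_bhattacharyya_lt_le (model_nonneg hρ hπ rstar) (model_nonneg hρ hπ)
            (fun s => (hmin s).1)
            (fun s => prod_model_le_of_empiricalLoss_le hn hρ hπ ((hmin s).2 rstar hrF)) t
      _ = δ := by
          rw [ht, mul_div_cancel₀ _ (by positivity), Real.exp_neg, Real.exp_log (by positivity)]
          field_simp
  have hgood : ∀ s, ¬ bhattacharyya p (model ρ πref (fhat s)) < 1 - t →
      pairwiseError ρ πref rstar (fhat s) ≤
        8 * ((1 / sigmoidDerivMin (2 * R)) ^ 2 / n) * Real.log (#FF / δ) := by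
    intro s hs
    calc _ ≤ 8 * (1 / sigmoidDerivMin (2 * R)) ^ 2 *
            (1 - bhattacharyya p (model ρ πref (fhat s))) :=
          pairwiseError_le hρ hρ₁ hπ hπ₁ hrR (hFR _ (hmin s).1)
      _ ≤ 8 * (1 / sigmoidDerivMin (2 * R)) ^ 2 * t := by gcongr; linarith
      _ = _ := by rw [ht]; ring
  have htotal : ∑ s : Fin n → X × Y × Y × Bool, ∏ i, p (s i) = 1 := by
    rw [← Fintype.piFinset_univ, ← sum_pow', sum_model hρ₁ hπ₁, one_pow]
  calc 1 - δ ≤ ∑ s : Fin n → X × Y × Y × Bool with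
        ¬ bhattacharyya p (model ρ πref (fhat s)) < 1 - t, ∏ i, p (s i) := by
        linarith [sum_filter_add_sum_filter_not univ
          (fun s => bhattacharyya p (model ρ πref (fhat s)) < 1 - t) fun s => ∏ i, p (s i)]
    _ ≤ _ := sum_le_sum_of_subset_of_nonneg (monotone_filter_right _ fun s _ => hgood s)
        fun s _ _ => prod_nonneg fun i _ => model_nonneg hρ hπ rstar _

end BradleyTerry

open scoped Classical in
/-- (Lemma "MLE") There is an absolute constant `C > 0` such
that for any finite function class `F` with `‖f‖_∞ ≤ R` and `r* ∈ F`, i.i.d.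
Bradley–Terry preference data (samples in `X × Y × Y × Bool`, `Bool` encoding
which response is preferred: the winner is `y` if the label is `true`, else `y'`),
any empirical-NLL minimizer `f̂ ∈ argmin_{f∈F} E_D(f)`, and
`κ = 1/(min_{z∈[−2R,2R]} σ'(z))` with `σ'(z) = σ(z)(1−σ(z))`, for any `δ ∈ (0,1)`,
with probability at least `1−δ`:
`E_{x~ρ, y1,y2~π_ref}[(r*(x,y1) − r*(x,y2) − f̂(x,y1) + f̂(x,y2))²]
   ≤ C·(κ²/n)·log(|F|/δ)`. -/
theorem mle_estimation_error : ∃ C : ℝ, 0 < C ∧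
    ∀ (X Y : Type) [Fintype X] [Fintype Y]
      (ρ : X → ℝ) (πref : X → Y → ℝ) (rstar : X → Y → ℝ)
      (FF : Finset (X → Y → ℝ)) (R : ℝ) (n : ℕ) (δ : ℝ)
      (fhat : (Fin n → X × Y × Y × Bool) → X → Y → ℝ),
      (∀ x, 0 ≤ ρ x) → (∑ x, ρ x) = 1 →
      (∀ x y, 0 ≤ πref x y) → (∀ x, ∑ y, πref x y = 1) →
      rstar ∈ FF → (∀ f ∈ FF, ∀ x y, |f x y| ≤ R) →
      (∀ x y, |rstar x y| ≤ R) →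
      0 < n → 0 < δ → δ < 1 →
      let σ : ℝ → ℝ := fun z => 1 / (1 + Real.exp (-z));
      let κ : ℝ := 1 / sInf ((fun z => σ z * (1 - σ z)) '' Set.Icc (-(2 * R)) (2 * R));
      let yw : X × Y × Y × Bool → Y := fun e => if e.2.2.2 then e.2.1 else e.2.2.1;
      let yl : X × Y × Y × Bool → Y := fun e => if e.2.2.2 then e.2.2.1 else e.2.1;
      let ED : (X → Y → ℝ) → (Fin n → X × Y × Y × Bool) → ℝ := fun f s =>
        -((1 : ℝ) / n) * ∑ i, Real.log (σ (f (s i).1 (yw (s i)) - f (s i).1 (yl (s i))));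
      let p : X × Y × Y × Bool → ℝ := fun e =>
        ρ e.1 * πref e.1 e.2.1 * πref e.1 e.2.2.1 *
          (if e.2.2.2 then σ (rstar e.1 e.2.1 - rstar e.1 e.2.2.1)
           else 1 - σ (rstar e.1 e.2.1 - rstar e.1 e.2.2.1));
      (∀ s, fhat s ∈ FF ∧ ∀ f ∈ FF, ED (fhat s) s ≤ ED f s) →
      1 - δ ≤ ∑ s ∈ Finset.univ.filter (fun s : Fin n → X × Y × Y × Bool =>
          ∑ x, ρ x * ∑ y1, ∑ y2, πref x y1 * πref x y2 *
              (rstar x y1 - rstar x y2 - fhat s x y1 + fhat s x y2) ^ 2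
            ≤ C * (κ ^ 2 / n) * Real.log (FF.card / δ)),
        ∏ i, p (s i) := by
  refine ⟨8, by norm_num, ?_⟩
  intro X Y _ _ ρ πref rstar FF R n δ fhat hρ hρ₁ hπ hπ₁ hrF hFR hrR hn hδ _ σ κ yw yl ED p hmin
  have hσ : ∀ z, σ z = sigmoid z := fun z => one_div _
  have hκ : κ = 1 / sigmoidDerivMin (2 * R) := by simp only [κ, hσ]; rfl
  have hp : p = BradleyTerry.model ρ πref rstar := by funext e; simp only [p, hσ]; rfl
  have hED : ∀ f s, ED f s = BradleyTerry.empiricalLoss f s := by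
    intro f s; simp only [ED, hσ]; rfl
  rw [hκ, hp]
  exact BradleyTerry.one_sub_le_sum_filter_pairwiseError_le hρ hρ₁ hπ hπ₁ hrF hFR hrR hn hδ
    fun s => ⟨(hmin s).1, fun f hf => hED (fhat s) s ▸ hED f s ▸ (hmin s).2 f hf⟩
end
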